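/- arXiv:1811.00171 — 5 statements merged into one kernel-verified Lean document; each statement's English description precedes it below -/
import Mathlib

section
/- The binary operation ⊕ on M = {e, ∞} ∪ S (where e acts as a neutral element, ∞ as an absorbing element, and ⊕ on S is as defined) is associative; hence (M, ⊕) is a monoid with identity e. -/
structure Res where
  tbg : ℕ
  cdo : ℕ
  tdo : ℕ
  cdt : ℕ
  tdt : ℕ

def Res.adm (q : Res) : Prop :=
  (q.tdo < q.tdt → q.cdo = q.cdt) ∧
  (q.tdt < q.tdo → q.cdo = q.cdt - 1) ∧
  (q.tdo = q.tdt → q.cdo = q.cdt ∨ q.cdo = q.cdt - 1)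

def Res.plus (a b : Res) : Res where
  tbg := a.tbg
  cdo := if a.tdo ≤ b.tbg then a.cdo + b.cdo else a.cdo + b.cdt
  tdo := if a.tdo ≤ b.tbg then b.tdo else b.tdt
  cdt := if a.tdt ≤ b.tbg then a.cdt + b.cdo else a.cdt + b.cdt
  tdt := if a.tdt ≤ b.tbg then b.tdo else b.tdt

/-- `M = {e, ∞} ∪ S`. -/
inductive M where
  | e : M
  | inf : M
  | res : Res → M

/-- `⊕` on `M`: `e` neutral, `∞` absorbing, and the resource operation on `S`. -/
def M.plus : M → M → M
  | M.e, q => q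
  | q, M.e => q
  | M.inf, _ => M.inf
  | _, M.inf => M.inf
  | M.res a, M.res b => M.res (a.plus b)

/-- Membership in `M = {e, ∞} ∪ S` (resource components must be admissible). -/
def M.adm : M → Prop
  | M.e => True
  | M.inf => True
  | M.res a => a.adm

lemma res_assoc (a b c : Res) (ha : a.adm) (hb : b.adm) (hc : c.adm) :
    (a.plus b).plus c = a.plus (b.plus c) := by
  obtain ⟨ha1, ha2, ha3⟩ := ha
  obtain ⟨hb1, hb2, hb3⟩ := hb
  obtain ⟨hc1, hc2, hc3⟩ := hc
  simp only [Res.plus, Res.mk.injEq]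
  refine ⟨trivial, ?_, ?_, ?_, ?_⟩ <;> split_ifs <;> omega

/-- `⊕` is associative on `M = {e,∞} ∪ S` and `e` is a neutral
element; hence `(M, ⊕)` is a monoid with identity `e`. -/
theorem M_plus_monoid :
    (∀ q : M, M.plus M.e q = q ∧ M.plus q M.e = q) ∧
    (∀ x y z : M, x.adm → y.adm → z.adm →
      M.plus (M.plus x y) z = M.plus x (M.plus y z)) := by
  constructor
  · intro q; cases q <;> simp [M.plus]
  · intro x y z hx hy hz
    cases x <;> cases y <;> cases z <;> simp [M.plus]
    exact res_assoc _ _ _ hx hy hz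
end

section
/- The set S of admissible resource triples is closed under the componentwise meet operation ∧ defined by: (q_a ∧ q_b) has t_bg = max(t_bg(a), t_bg(b)), (c_do, t_do) = lexicographic minimum of (c_do(a), t_do(a)) and (c_do(b), t_do(b)), and (c_dt, t_dt) = lexicographic minimum of (c_dt(a), t_dt(a)) and (c_dt(b), t_dt(b)). -/
/-- Lexicographic order `≤_lex` on `ℕ²`. -/
def lexLe (p q : ℕ × ℕ) : Prop :=
  p.1 < q.1 ∨ (p.1 = q.1 ∧ p.2 ≤ q.2)

instance (p q : ℕ × ℕ) : Decidable (lexLe p q) := by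
  unfold lexLe; infer_instance

/-- Lexicographic minimum on `ℕ²`. -/
def lexMin (p q : ℕ × ℕ) : ℕ × ℕ :=
  if lexLe p q then p else q

/-- The meet operation `∧` on resources: max of start times, lexicographic
minima of the `(c, t)`-pairs. -/
def Res.meet (a b : Res) : Res where
  tbg := max a.tbg b.tbg
  cdo := (lexMin (a.cdo, a.tdo) (b.cdo, b.tdo)).1
  tdo := (lexMin (a.cdo, a.tdo) (b.cdo, b.tdo)).2
  cdt := (lexMin (a.cdt, a.tdt) (b.cdt, b.tdt)).1
  tdt := (lexMin (a.cdt, a.tdt) (b.cdt, b.tdt)).2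

/-!
Order the `(c, t)`-pairs lexicographically. Admissibility says that the `do`-pair lies in a
half-open lex-interval `[L dt, U dt)` whose endpoints depend monotonically on the `dt`-pair; for
`c_dt ≥ 1` it is `[(c_dt - 1, t_dt), (c_dt, t_dt + 1))`. The meet takes the lexicographic minimum of
both pairs, and `min` commutes with monotone maps, so it stays inside such a band.
-/

theorem min_mem_Ico_of_monotone {α β : Type*} [LinearOrder α] [LinearOrder β] {L U : α → β}
    (hL : Monotone L) (hU : Monotone U) {x x' : α} {y y' : β}
    (h : y ∈ Set.Ico (L x) (U x)) (h' : y' ∈ Set.Ico (L x') (U x')) :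
    min y y' ∈ Set.Ico (L (min x x')) (U (min x x')) := by
  rw [hL.map_min, hU.map_min]
  exact ⟨min_le_min h.1 h'.1, min_lt_min h.2 h'.2⟩

theorem toLex_lexMin (p q : ℕ × ℕ) : toLex (lexMin p q) = min (toLex p) (toLex q) := by
  have hle : lexLe p q ↔ toLex p ≤ toLex q := Prod.Lex.toLex_le_toLex.symm
  unfold lexMin
  split_ifs with h
  · exact (min_eq_left (hle.1 h)).symm
  · exact (min_eq_right (not_le.1 (hle.not.1 h)).le).symm

namespace Res

def doLex (q : Res) : ℕ ×ₗ ℕ := toLex (q.cdo, q.tdo)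

def dtLex (q : Res) : ℕ ×ₗ ℕ := toLex (q.cdt, q.tdt)

theorem doLex_meet (a b : Res) : (a.meet b).doLex = min a.doLex b.doLex :=
  toLex_lexMin _ _

theorem dtLex_meet (a b : Res) : (a.meet b).dtLex = min a.dtLex b.dtLex :=
  toLex_lexMin _ _

/- At `c_dt = 0` the truncated `c_dt - 1` is `0`, so admissibility only asks `c_do = 0`, with
`t_do` free: hence the special values of both bounds there. -/
def admLower (P : ℕ ×ₗ ℕ) : ℕ ×ₗ ℕ :=
  if (ofLex P).1 = 0 then toLex (0, 0) else toLex ((ofLex P).1 - 1, (ofLex P).2)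

def admUpper (P : ℕ ×ₗ ℕ) : ℕ ×ₗ ℕ :=
  if (ofLex P).1 = 0 then toLex (1, 0) else toLex ((ofLex P).1, (ofLex P).2 + 1)

theorem monotone_admLower : Monotone admLower := by
  intro P Q h
  rw [Prod.Lex.le_iff] at h
  unfold admLower
  split_ifs <;> simp only [Prod.Lex.toLex_le_toLex, true_and] <;> omega

theorem monotone_admUpper : Monotone admUpper := by
  intro P Q h
  rw [Prod.Lex.le_iff] at h
  unfold admUpper
  split_ifs <;> simp only [Prod.Lex.toLex_le_toLex, true_and] <;> omega

theorem adm_iff_doLex_mem_Ico (q : Res) :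
    q.adm ↔ q.doLex ∈ Set.Ico (admLower q.dtLex) (admUpper q.dtLex) := by
  unfold adm doLex dtLex admLower admUpper
  simp only [ofLex_toLex, Set.mem_Ico]
  by_cases hc : q.cdt = 0 <;>
    simp only [hc, if_true, if_false, Prod.Lex.toLex_le_toLex, Prod.Lex.toLex_lt_toLex] <;> omega

end Res

/-- `S` is closed under the meet operation. -/
theorem S_closed_under_meet (a b : Res) (ha : a.adm) (hb : b.adm) :
    (a.meet b).adm := by
  rw [Res.adm_iff_doLex_mem_Ico] at ha hb ⊢
  rw [Res.doLex_meet, Res.dtLex_meet]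
  exact min_mem_Ico_of_monotone Res.monotone_admLower Res.monotone_admUpper ha hb
end

section
/- In the enumeration algorithm for the monoid resource constrained shortest path problem, the key function provides a valid lower bound: for any o–v path P and any v–d path Q in the digraph D, key(P) ≤ c(q_{P} ⊕ q_{Q}) = c(q_{P+Q}) whenever P+Q is feasible (ρ(q_{P+Q}) = 0), where key(P) = min{c(q_P ⊕ b) : b ∈ B_v, ρ(q_P ⊕ b) = 0} (with min over the empty set equal to +∞). -/
/-- Walks in a digraph given by an arc relation `A` on vertices `V`. -/
inductive Walk (V : Type) (A : V → V → Prop) : V → V → Type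
  | nil (v : V) : Walk V A v v
  | cons {u v w : V} (h : A u v) (p : Walk V A v w) : Walk V A u w

/-- The resource of a walk: `⊕` of the arc resources along the walk
(the empty walk has the neutral resource `e`). -/
def Walk.res {V : Type} {A : V → V → Prop} {M : Type}
    (op : M → M → M) (e : M) (q : ∀ u v, A u v → M) :
    ∀ {u w : V}, Walk V A u w → M
  | _, _, .nil _ => e
  | _, _, .cons h p => op (q _ _ h) (p.res op e q)

/-- in the enumeration algorithm for the monoid resource
constrained shortest path problem, `key(P)` is a valid lower bound: for any
`o`–`v` path `P` and `v`–`d` path `Q` with `P + Q` feasible,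
`key(P) ≤ c(q_P ⊕ q_Q) = c(q_{P+Q})`, where
`key(P) = min {c(q_P ⊕ b) : b ∈ B_v, ρ(q_P ⊕ b) = 0}` (min ∅ = +∞). -/
theorem key_is_lower_bound
    {M : Type} (op : M → M → M) (e : M) (le : M → M → Prop)
    -- lattice ordered monoid axioms (the lattice structure beyond the order
    -- is not needed for this statement)
    (hassoc : ∀ x y z : M, op (op x y) z = op x (op y z))
    (hneutral : ∀ x : M, op e x = x ∧ op x e = x)
    (hrefl : ∀ x : M, le x x)
    (htrans : ∀ x y z : M, le x y → le y z → le x z)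
    (hantisymm : ∀ x y : M, le x y → le y x → x = y)
    (hcompat : ∀ x y z : M, le x y → le (op x z) (op y z) ∧ le (op z x) (op z y))
    -- non-decreasing cost and infeasibility functions
    (c : M → ℝ) (ρ : M → ℕ)
    (hρ01 : ∀ x : M, ρ x = 0 ∨ ρ x = 1)
    (hc_mono : ∀ x y : M, le x y → c x ≤ c y)
    (hρ_mono : ∀ x y : M, le x y → ρ x ≤ ρ y)
    -- the digraph, its arc resources, and the destination
    {V : Type} (A : V → V → Prop) (q : ∀ u v : V, A u v → M) (o d : V)
    -- the set of lower bounds at `v`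
    (v : V) (Bv : Set M)
    (hB : ∀ Q : Walk V A v d, ∃ b ∈ Bv, le b (Q.res op e q))
    -- the paths `P` and `Q`, with `P + Q` feasible
    (P : Walk V A o v) (Q : Walk V A v d)
    (hfeas : ρ (op (P.res op e q) (Q.res op e q)) = 0) :
    sInf {x : EReal | ∃ b ∈ Bv, ρ (op (P.res op e q) b) = 0 ∧
        x = ((c (op (P.res op e q) b) : ℝ) : EReal)}
      ≤ ((c (op (P.res op e q) (Q.res op e q)) : ℝ) : EReal) := by
  obtain ⟨b, hbB, hble⟩ := hB Q
  have hle : le (op (P.res op e q) b) (op (P.res op e q) (Q.res op e q)) :=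
    (hcompat b (Q.res op e q) (P.res op e q) hble).2
  have hρb : ρ (op (P.res op e q) b) = 0 := by
    have := hρ_mono _ _ hle
    omega
  have hmem : ((c (op (P.res op e q) b) : ℝ) : EReal) ∈
      {x : EReal | ∃ b ∈ Bv, ρ (op (P.res op e q) b) = 0 ∧
        x = ((c (op (P.res op e q) b) : ℝ) : EReal)} :=
    ⟨b, hbB, hρb, rfl⟩
  refine le_trans (sInf_le hmem) ?_
  exact_mod_cast hc_mono _ _ hle
end

section
/- Suppose the digraph D is acyclic. Then the enumeration algorithm for the monoid resource constrained shortest path problem terminates after finitely many iterations, and upon termination the maintained value c_od^UB equals the cost of an optimal feasible o–d path if one exists and +∞ otherwise. -/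
/-- Extending a walk by one arc at its end. -/
def Walk.snoc {V : Type} {A : V → V → Prop} :
    ∀ {u v w : V}, Walk V A u v → A v w → Walk V A u w
  | _, _, _, .nil _, h => .cons h (.nil _)
  | _, _, _, .cons ha p, h => .cons ha (p.snoc h)

section Algorithm

variable {M : Type} (op : M → M → M) (e : M) (c : M → ℝ) (ρ : M → ℕ)
  {V : Type} (A : V → V → Prop) (q : ∀ u v : V, A u v → M) (o d : V)
  (B : V → Set M)

/-- A partial path: a walk from the origin `o` to some vertex. -/
abbrev PartialPath := Σ v : V, Walk V A o v

/-- `key(P) = min {c(q_P ⊕ b) : b ∈ B_v, ρ(q_P ⊕ b) = 0}`, with `min ∅ = +∞`,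
where `v` is the last vertex of `P`. -/
noncomputable def key (P : PartialPath A o) : EReal :=
  sInf {x : EReal | ∃ b ∈ B P.1, ρ (op (P.2.res op e q) b) = 0 ∧
    x = ((c (op (P.2.res op e q) b) : ℝ) : EReal)}

/-- The state of the enumeration algorithm: the list `L` of partial paths and
the incumbent upper bound `c_od^UB`. -/
structure AlgState (V : Type) (A : V → V → Prop) (o : V) where
  L : Set (PartialPath A o)
  ub : EReal

/-- The initial state: `L` contains only the empty path at `o`, `c_od^UB = +∞`. -/
noncomputable def initState : AlgState V A o := ⟨{⟨o, .nil o⟩}, ⊤⟩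

/-- One iteration of the enumeration algorithm: extract from `L` a path `P` of
minimum key; if `P` is a feasible `o`–`d` path of cost below the incumbent,
update the incumbent; otherwise insert into `L` every extension `P + a` with
`key(P + a)` below the incumbent. -/
def algStep (s s' : AlgState V A o) : Prop :=
  ∃ P ∈ s.L, (∀ P' ∈ s.L, key op e c ρ A q o B P ≤ key op e c ρ A q o B P') ∧
    ((P.1 = d ∧ ρ (P.2.res op e q) = 0 ∧
        ((c (P.2.res op e q) : ℝ) : EReal) < s.ub ∧
        s'.L = s.L \ {P} ∧ s'.ub = ((c (P.2.res op e q) : ℝ) : EReal))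
     ∨ (¬(P.1 = d ∧ ρ (P.2.res op e q) = 0 ∧
          ((c (P.2.res op e q) : ℝ) : EReal) < s.ub) ∧
        s'.ub = s.ub ∧
        s'.L = (s.L \ {P}) ∪ {P' | ∃ w, ∃ h : A P.1 w,
          P' = ⟨w, P.2.snoc h⟩ ∧ key op e c ρ A q o B ⟨w, P.2.snoc h⟩ < s.ub}))

/-- The optimal value of the monoid resource constrained shortest path problem:
the least cost of a feasible `o`–`d` path (`+∞` if none exists). -/
noncomputable def optValue : EReal :=
  sInf {x : EReal | ∃ P : Walk V A o d, ρ (P.res op e q) = 0 ∧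
    x = ((c (P.res op e q) : ℝ) : EReal)}

end Algorithm

namespace Walk

variable {V : Type} {A : V → V → Prop}

def append : ∀ {u v w : V}, Walk V A u v → Walk V A v w → Walk V A u w
  | _, _, _, .nil _, R => R
  | _, _, _, .cons h p, R => .cons h (p.append R)

def support : ∀ {u v : V}, Walk V A u v → List V
  | _, _, .nil v => [v]
  | u, _, .cons _ p => u :: p.support

@[simp]
theorem append_nil : ∀ {u v : V} (P : Walk V A u v), P.append (.nil v) = P
  | _, _, .nil _ => rfl
  | _, _, .cons h p => congrArg (Walk.cons h) (append_nil p)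

theorem snoc_append : ∀ {u v w x : V} (P : Walk V A u v) (h : A v w) (R : Walk V A w x),
    (P.snoc h).append R = P.append (.cons h R)
  | _, _, _, _, .nil _, _, _ => rfl
  | _, _, _, _, .cons ha p, h, R => congrArg (Walk.cons ha) (snoc_append p h R)

theorem res_append {M : Type} (op : M → M → M) (e : M) (q : ∀ u v, A u v → M)
    (hassoc : ∀ x y z : M, op (op x y) z = op x (op y z)) (hneutral : ∀ x : M, op e x = x) :
    ∀ {u v w : V} (P : Walk V A u v) (R : Walk V A v w),
      (P.append R).res op e q = op (P.res op e q) (R.res op e q)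
  | _, _, _, .nil _, R => (hneutral _).symm
  | _, _, _, .cons h p, R => by
      change op _ ((p.append R).res op e q) = op (op _ _) _
      rw [res_append op e q hassoc hneutral p R, hassoc]

theorem support_head? : ∀ {u v : V} (P : Walk V A u v), P.support.head? = some u
  | _, _, .nil _ => rfl
  | _, _, .cons _ _ => rfl

theorem support_ne_nil {u v : V} (P : Walk V A u v) : P.support ≠ [] := by
  simp [← List.head?_eq_none_iff, P.support_head?]

theorem support_snoc : ∀ {u v w : V} (P : Walk V A u v) (h : A v w),
    (P.snoc h).support = P.support ++ [w]
  | _, _, _, .nil _, _ => rfl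
  | u, _, _, .cons _ p, h => congrArg (u :: ·) (support_snoc p h)

theorem reflTransGen_of_mem_support : ∀ {u w : V} (P : Walk V A u w) {x : V},
    x ∈ P.support → Relation.ReflTransGen A u x
  | _, _, .nil _, _, hx => by rw [List.mem_singleton.1 hx]
  | _, _, .cons h p, _, hx => by
      rcases List.mem_cons.1 hx with rfl | hx
      · rfl
      · exact .head h (reflTransGen_of_mem_support p hx)

theorem reflTransGen : ∀ {u w : V}, Walk V A u w → Relation.ReflTransGen A u w
  | _, _, .nil _ => .refl
  | _, _, .cons h p => .head h p.reflTransGen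

theorem support_nodup (hacyclic : ∀ v : V, ¬ Relation.TransGen A v v) :
    ∀ {u w : V} (P : Walk V A u w), P.support.Nodup
  | _, _, .nil _ => List.nodup_singleton _
  | u, _, .cons h p => List.nodup_cons.2
      ⟨fun hu => hacyclic u (.head' h (reflTransGen_of_mem_support p hu)),
        support_nodup hacyclic p⟩

theorem eq_nil_of_acyclic (hacyclic : ∀ v : V, ¬ Relation.TransGen A v v) {v : V}
    (P : Walk V A v v) : P = .nil v := by
  cases P with
  | nil => rfl
  | cons h p => exact absurd (.head' h p.reflTransGen) (hacyclic _)

theorem support_injective {u : V} :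
    Function.Injective fun P : Σ v, Walk V A u v => P.2.support := by
  rintro ⟨v₁, P₁⟩ ⟨v₂, P₂⟩ hs
  induction P₁ with
  | nil =>
      cases P₂ with
      | nil => rfl
      | cons _ p => simp [support, p.support_ne_nil] at hs
  | cons h p ih =>
      cases P₂ with
      | nil => simp [support, p.support_ne_nil] at hs
      | cons h' p' =>
          have htail : p.support = p'.support := (List.cons.inj hs).2
          obtain rfl := Option.some.inj (p.support_head?.symm.trans (htail ▸ p'.support_head?))
          obtain ⟨rfl, hp⟩ := Sigma.mk.inj_iff.1 (ih p' htail)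
          cases eq_of_heq hp
          rfl

end Walk

theorem PartialPath.finite {V : Type} [Fintype V] {A : V → V → Prop}
    (hacyclic : ∀ v : V, ¬ Relation.TransGen A v v) (o : V) : Finite (PartialPath A o) :=
  Finite.of_injective (fun P : PartialPath A o => (⟨P.2.support, P.2.support_nodup hacyclic⟩ :
    {l : List V // l.Nodup})) fun _ _ h => Walk.support_injective (congrArg Subtype.val h)

/-- `r x y` reads "`y` is a child of `x`": each round removes the chosen `P n` from the list and
inserts only children of it. -/
theorem injective_of_exploration {α : Type*} {r : α → α → Prop} (hwf : WellFounded r)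
    (hparent : ∀ x y z, r x z → r y z → x = y) {L : ℕ → Set α} {P : ℕ → α}
    (hroots : ∀ z ∈ L 0, ∀ x, ¬ r x z) (hP : ∀ n, P n ∈ L n)
    (hstep : ∀ n, L (n + 1) ⊆ (L n \ {P n}) ∪ {z | r (P n) z}) :
    Function.Injective P := by
  have inserted : ∀ {k m z}, k ≤ m → z ∈ L m → z ∉ L k → ∃ j, k ≤ j ∧ j < m ∧ r (P j) z := by
    intro k m z hkm hm hk
    induction m, hkm using Nat.le_induction with
    | base => exact absurd hm hk
    | succ m hkm ih =>
      rcases hstep m hm with ⟨hm, -⟩ | hchild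
      · obtain ⟨j, hkj, hjm, hj⟩ := ih hm
        exact ⟨j, hkj, hjm.trans m.lt_succ_self, hj⟩
      · exact ⟨m, hkm, m.lt_succ_self, hchild⟩
  have never_reinserted : ∀ {n m z}, n < m → P n = z → P m = z → False := by
    intro n m z
    induction z using hwf.induction generalizing n m with
    | _ z ih =>
      intro hnm hn hm
      have hgone : z ∉ L (n + 1) := fun hz => by
        rcases hstep n hz with ⟨-, hne⟩ | hchild
        · exact hne hn.symm
        · exact hwf.irrefl.irrefl z (hn ▸ hchild)
      obtain ⟨j, hnj, hjm, hj⟩ := inserted hnm (hm ▸ hP m) hgone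
      obtain ⟨j', -, hj'n, hj'⟩ := inserted n.zero_le (hn ▸ hP n) fun hz => hroots z hz _ hj
      exact ih (P j) hj (by omega) (hparent _ _ _ hj' hj) rfl
  intro a b hab
  by_contra hne
  rcases lt_or_gt_of_ne hne with h | h
  · exact never_reinserted h hab rfl
  · exact never_reinserted h hab.symm rfl

namespace PartialPath

variable {V : Type} {A : V → V → Prop} {o : V}

def ExtendsByArc (P P' : PartialPath A o) : Prop :=
  ∃ w, ∃ h : A P.1 w, P' = ⟨w, P.2.snoc h⟩

theorem extendsByArc_wellFounded : WellFounded (ExtendsByArc (A := A) (o := o)) :=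
  Subrelation.wf (r := InvImage (· < ·) fun P : PartialPath A o => P.2.support.length)
    (by rintro _ _ ⟨w, h, rfl⟩; simp [InvImage, Walk.support_snoc])
    (InvImage.wf _ wellFounded_lt)

theorem ExtendsByArc.unique {P P' P'' : PartialPath A o} :
    ExtendsByArc P P'' → ExtendsByArc P' P'' → P = P' := by
  rintro ⟨w, h, rfl⟩ ⟨w', h', hw⟩
  have hs := congrArg (fun P : PartialPath A o => P.2.support) hw
  simp only [Walk.support_snoc] at hs
  exact Walk.support_injective (List.append_inj_left' hs rfl)

theorem not_extendsByArc_nil (P : PartialPath A o) : ¬ ExtendsByArc P ⟨o, .nil o⟩ := by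
  rintro ⟨w, h, hw⟩
  have hs := congrArg (fun P : PartialPath A o => P.2.support.length) hw
  simp [Walk.support, Walk.support_snoc, P.2.support_ne_nil] at hs

end PartialPath

/-- The costs of the feasible `o`–`d` paths; `optValue` is their infimum. -/
def feasibleCosts {M : Type} (op : M → M → M) (e : M) (c : M → ℝ) (ρ : M → ℕ)
    {V : Type} (A : V → V → Prop) (q : ∀ u v : V, A u v → M) (o d : V) : Set EReal :=
  {x | ∃ P : Walk V A o d, ρ (P.res op e q) = 0 ∧ x = ((c (P.res op e q) : ℝ) : EReal)}

def IsCovered {M : Type} (op : M → M → M) (e : M) (c : M → ℝ)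
    {V : Type} {A : V → V → Prop} (q : ∀ u v : V, A u v → M) {o d : V}
    (s : AlgState V A o) (Q : Walk V A o d) : Prop :=
  s.ub ≤ ((c (Q.res op e q) : ℝ) : EReal) ∨
    ∃ (v : V) (P : Walk V A o v) (R : Walk V A v d), P.append R = Q ∧ ⟨v, P⟩ ∈ s.L

section Algorithm

variable {M : Type} {op : M → M → M} {e : M} {c : M → ℝ} {ρ : M → ℕ}
  {V : Type} {A : V → V → Prop} {q : ∀ u v : V, A u v → M} {o d : V} {B : V → Set M}

/-- The bound `b ⪯ q_R` for the remaining walk `R` makes `q_P ⊕ b` feasible and no costlier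
than `q_P ⊕ q_R`. -/
theorem key_le_cost {le : M → M → Prop}
    (hcompat : ∀ x y z : M, le x y → le (op z x) (op z y))
    (hc_mono : ∀ x y : M, le x y → c x ≤ c y) (hρ_mono : ∀ x y : M, le x y → ρ x ≤ ρ y)
    (hB : ∀ (v : V) (Q : Walk V A v d), ∃ b ∈ B v, le b (Q.res op e q))
    {v : V} (P : Walk V A o v) (R : Walk V A v d)
    (hfeas : ρ (op (P.res op e q) (R.res op e q)) = 0) :
    key op e c ρ A q o B ⟨v, P⟩ ≤ ((c (op (P.res op e q) (R.res op e q)) : ℝ) : EReal) := by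
  obtain ⟨b, hbB, hbR⟩ := hB v R
  have hle := hcompat _ _ (P.res op e q) hbR
  have hρb : ρ (op (P.res op e q) b) = 0 := Nat.le_zero.1 (hfeas ▸ hρ_mono _ _ hle)
  calc key op e c ρ A q o B ⟨v, P⟩ ≤ ((c (op (P.res op e q) b) : ℝ) : EReal) :=
        sInf_le ⟨b, hbB, hρb, rfl⟩
    _ ≤ _ := EReal.coe_le_coe_iff.2 (hc_mono _ _ hle)

theorem algStep_ub_le {s s' : AlgState V A o} (hstep : algStep op e c ρ A q o d B s s') :
    s'.ub ≤ s.ub := by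
  obtain ⟨P, -, -, ⟨-, -, hlt, -, hub⟩ | ⟨-, hub, -⟩⟩ := hstep
  · exact hub ▸ hlt.le
  · exact hub.le

theorem algStep_L_subset {s s' : AlgState V A o} (hstep : algStep op e c ρ A q o d B s s') :
    ∃ P ∈ s.L, s'.L ⊆ (s.L \ {P}) ∪ {P' | PartialPath.ExtendsByArc P P'} := by
  obtain ⟨P, hP, -, ⟨-, -, -, hL, -⟩ | ⟨-, -, hL⟩⟩ := hstep
  · exact ⟨P, hP, hL ▸ Set.subset_union_left⟩
  · refine ⟨P, hP, hL ▸ Set.union_subset_union_right _ ?_⟩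
    rintro _ ⟨w, h, rfl, -⟩
    exact ⟨w, h, rfl⟩

theorem algStep_ub_mem {s s' : AlgState V A o} (hstep : algStep op e c ρ A q o d B s s')
    (hs : s.ub ∈ insert ⊤ (feasibleCosts op e c ρ A q o d)) :
    s'.ub ∈ insert ⊤ (feasibleCosts op e c ρ A q o d) := by
  obtain ⟨⟨v, P⟩, -, -, ⟨hd, hfeas, -, -, hub⟩ | ⟨-, hub, -⟩⟩ := hstep
  · obtain rfl : v = d := hd
    exact Or.inr ⟨P, hfeas, hub⟩
  · exact hub ▸ hs

theorem isCovered_initState (Q : Walk V A o d) : IsCovered op e c q (initState A o) Q :=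
  Or.inr ⟨o, .nil o, Q, rfl, rfl⟩

theorem IsCovered.algStep {le : M → M → Prop}
    (hassoc : ∀ x y z : M, op (op x y) z = op x (op y z)) (hneutral : ∀ x : M, op e x = x)
    (hcompat : ∀ x y z : M, le x y → le (op z x) (op z y))
    (hc_mono : ∀ x y : M, le x y → c x ≤ c y) (hρ_mono : ∀ x y : M, le x y → ρ x ≤ ρ y)
    (hacyclic : ∀ v : V, ¬ Relation.TransGen A v v)
    (hB : ∀ (v : V) (Q : Walk V A v d), ∃ b ∈ B v, le b (Q.res op e q))
    {s s' : AlgState V A o} (hstep : algStep op e c ρ A q o d B s s')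
    {Q : Walk V A o d} (hQ : ρ (Q.res op e q) = 0) (hcov : IsCovered op e c q s Q) :
    IsCovered op e c q s' Q := by
  have hub_le := algStep_ub_le hstep
  obtain ⟨P₀, -, -, hbranch⟩ := hstep
  rcases hcov with hle | ⟨v, P, R, rfl, hmem⟩
  · exact Or.inl (hub_le.trans hle)
  by_cases hP₀ : (⟨v, P⟩ : PartialPath A o) = P₀
  swap
  · have hkept : s.L \ {P₀} ⊆ s'.L := by
      rcases hbranch with ⟨-, -, -, hL, -⟩ | ⟨-, -, hL⟩
      · exact hL.symm.subset
      · exact hL ▸ Set.subset_union_left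
    exact Or.inr ⟨v, P, R, rfl, hkept ⟨hmem, hP₀⟩⟩
  subst hP₀
  rcases hbranch with ⟨hd, -, -, -, hub⟩ | ⟨hnot, hub, hL⟩
  · obtain rfl : v = d := hd
    obtain rfl := R.eq_nil_of_acyclic hacyclic
    refine Or.inl ?_
    rw [hub, Walk.append_nil]
  cases R with
  | nil =>
    rw [Walk.append_nil] at hQ ⊢
    exact Or.inl (hub ▸ not_lt.1 fun hlt => hnot ⟨rfl, hQ, hlt⟩)
  | cons h R =>
    rw [← Walk.snoc_append] at hQ ⊢
    by_cases hkey : key op e c ρ A q o B ⟨_, P.snoc h⟩ < s.ub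
    · exact Or.inr ⟨_, P.snoc h, R, rfl, hL ▸ Or.inr ⟨_, h, rfl, hkey⟩⟩
    · refine Or.inl ?_
      rw [Walk.res_append op e q hassoc hneutral] at hQ ⊢
      exact hub ▸ (not_lt.1 hkey).trans (key_le_cost hcompat hc_mono hρ_mono hB _ _ hQ)

theorem algStep_run_invariant (I : AlgState V A o → Prop) (hinit : I (initState A o))
    (hpres : ∀ s s', algStep op e c ρ A q o d B s s' → I s → I s')
    {N : ℕ} {f : ℕ → AlgState V A o} (h0 : f 0 = initState A o)
    (hsteps : ∀ i < N, algStep op e c ρ A q o d B (f i) (f (i + 1))) : I (f N) := by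
  induction N with
  | zero => exact h0 ▸ hinit
  | succ N ih =>
    exact hpres _ _ (hsteps N N.lt_succ_self) (ih fun i hi => hsteps i (hi.trans N.lt_succ_self))

theorem not_exists_infinite_run [Fintype V] (hacyclic : ∀ v : V, ¬ Relation.TransGen A v v) :
    ¬ ∃ f : ℕ → AlgState V A o, f 0 = initState A o ∧
      ∀ n, algStep op e c ρ A q o d B (f n) (f (n + 1)) := by
  rintro ⟨f, h0, hsteps⟩
  choose P hP hL using fun n => algStep_L_subset (hsteps n)
  have := PartialPath.finite hacyclic o
  refine not_injective_infinite_finite P (injective_of_exploration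
    PartialPath.extendsByArc_wellFounded (fun _ _ _ => PartialPath.ExtendsByArc.unique) ?_ hP hL)
  rintro _ hroot P'
  rw [h0, initState] at hroot
  rw [Set.mem_singleton_iff.1 hroot]
  exact P'.not_extendsByArc_nil

end Algorithm

theorem enumeration_algorithm_correct_general
    {M : Type} (op : M → M → M) (e : M) (le : M → M → Prop)
    -- lattice ordered monoid axioms
    (hassoc : ∀ x y z : M, op (op x y) z = op x (op y z))
    (hneutral : ∀ x : M, op e x = x ∧ op x e = x)
    (hcompat : ∀ x y z : M, le x y → le (op x z) (op y z) ∧ le (op z x) (op z y))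
    -- non-decreasing cost and infeasibility functions
    (c : M → ℝ) (ρ : M → ℕ)
    (hc_mono : ∀ x y : M, le x y → c x ≤ c y)
    (hρ_mono : ∀ x y : M, le x y → ρ x ≤ ρ y)
    -- a finite acyclic digraph with arc resources
    {V : Type} [Fintype V] (A : V → V → Prop)
    (hacyclic : ∀ v : V, ¬ Relation.TransGen A v v)
    (q : ∀ u v : V, A u v → M) (o d : V)
    -- valid sets of lower bounds
    (B : V → Set M)
    (hB : ∀ (v : V) (Q : Walk V A v d), ∃ b ∈ B v, le b (Q.res op e q)) :
    -- termination: there is no infinite execution from the initial state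
    (¬ ∃ f : ℕ → AlgState V A o, f 0 = initState A o ∧
        ∀ n, algStep op e c ρ A q o d B (f n) (f (n + 1))) ∧
    -- correctness: upon termination (empty list), the incumbent equals the
    -- optimal value
    (∀ (N : ℕ) (f : ℕ → AlgState V A o), f 0 = initState A o →
        (∀ i < N, algStep op e c ρ A q o d B (f i) (f (i + 1))) →
        (f N).L = ∅ → (f N).ub = optValue op e c ρ A q o d) := by
  refine ⟨not_exists_infinite_run hacyclic, fun N f h0 hsteps hempty => ?_⟩
  change (f N).ub = sInf (feasibleCosts op e c ρ A q o d)
  refine le_antisymm (le_sInf ?_) ?_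
  · rintro _ ⟨Q, hQ, rfl⟩
    have hcov : IsCovered op e c q (f N) Q :=
      algStep_run_invariant _ (isCovered_initState Q)
        (fun _ _ hstep => IsCovered.algStep hassoc (fun x => (hneutral x).1)
          (fun x y z h => (hcompat x y z h).2) hc_mono hρ_mono hacyclic hB hstep hQ)
        h0 hsteps
    rcases hcov with hle | ⟨_, _, _, -, hmem⟩
    · exact hle
    · exact absurd (hempty ▸ hmem) (Set.notMem_empty _)
  · rcases algStep_run_invariant (fun s => s.ub ∈ insert ⊤ (feasibleCosts op e c ρ A q o d))
      (Set.mem_insert _ _) (fun _ _ => algStep_ub_mem) h0 hsteps with htop | hfeas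
    · exact htop ▸ le_top
    · exact sInf_le hfeas

/-- if the digraph is (finite and) acyclic, the enumeration
algorithm terminates after finitely many iterations, and upon termination the
incumbent `c_od^UB` equals the cost of an optimal feasible `o`–`d` path if one
exists, and `+∞` otherwise. -/
theorem enumeration_algorithm_correct
    {M : Type} (op : M → M → M) (e : M) (le : M → M → Prop)
    -- lattice ordered monoid axioms
    (hassoc : ∀ x y z : M, op (op x y) z = op x (op y z))
    (hneutral : ∀ x : M, op e x = x ∧ op x e = x)
    (hrefl : ∀ x : M, le x x)
    (htrans : ∀ x y z : M, le x y → le y z → le x z)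
    (hantisymm : ∀ x y : M, le x y → le y x → x = y)
    (hmeet : ∀ x y : M, ∃ m : M, le m x ∧ le m y ∧
      ∀ z : M, le z x → le z y → le z m)
    (hjoin : ∀ x y : M, ∃ j : M, le x j ∧ le y j ∧
      ∀ z : M, le x z → le y z → le j z)
    (hcompat : ∀ x y z : M, le x y → le (op x z) (op y z) ∧ le (op z x) (op z y))
    -- non-decreasing cost and infeasibility functions
    (c : M → ℝ) (ρ : M → ℕ)
    (hρ01 : ∀ x : M, ρ x = 0 ∨ ρ x = 1)
    (hc_mono : ∀ x y : M, le x y → c x ≤ c y)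
    (hρ_mono : ∀ x y : M, le x y → ρ x ≤ ρ y)
    -- a finite acyclic digraph with arc resources
    {V : Type} [Fintype V] (A : V → V → Prop)
    (hacyclic : ∀ v : V, ¬ Relation.TransGen A v v)
    (q : ∀ u v : V, A u v → M) (o d : V)
    -- valid sets of lower bounds
    (B : V → Set M)
    (hB : ∀ (v : V) (Q : Walk V A v d), ∃ b ∈ B v, le b (Q.res op e q)) :
    -- termination: there is no infinite execution from the initial state
    (¬ ∃ f : ℕ → AlgState V A o, f 0 = initState A o ∧
        ∀ n, algStep op e c ρ A q o d B (f n) (f (n + 1))) ∧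
    -- correctness: upon termination (empty list), the incumbent equals the
    -- optimal value
    (∀ (N : ℕ) (f : ℕ → AlgState V A o), f 0 = initState A o →
        (∀ i < N, algStep op e c ρ A q o d B (f i) (f (i + 1))) →
        (f N).L = ∅ → (f N).ub = optValue op e c ρ A q o d) :=
  enumeration_algorithm_correct_general op e le hassoc hneutral hcompat c ρ hc_mono hρ_mono A
    hacyclic q o d B hB
end

section
/- Let P be an o–d path in the shift digraph D decomposed as an o–v path Q followed by an arc a, and equip each arc with its scenario-ω resource in the monoid M = {e, ∞} ∪ S. Then the resource of P under scenario ω, computed by the monoid sum ⊕ along its arcs, equals ((realized start time of the first job of the corresponding shift), (number of rescheduled jobs, realized completion time of the last non-rescheduled job), (number of jobs that would be rescheduled if the first job were rescheduled, corresponding completion time)); in particular the c_do-component of ⊕_{a∈P} q_a^ω equals the number of rescheduled jobs of the shift of P under ω. -/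
/-! Delay-propagation resources with times in `WithBot ℤ` (`⊥` playing the
role of `−∞`) and rescheduling counts in `ℕ`. -/

structure ResW where
  tbg : WithBot ℤ
  cdo : ℕ
  tdo : WithBot ℤ
  cdt : ℕ
  tdt : WithBot ℤ

/-- The monoid `M = {e, ∞} ∪ S`. -/
inductive MW where
  | e : MW
  | inf : MW
  | res : ResW → MW

noncomputable def ResW.plus (a b : ResW) : ResW where
  tbg := a.tbg
  cdo := if a.tdo ≤ b.tbg then a.cdo + b.cdo else a.cdo + b.cdt
  tdo := if a.tdo ≤ b.tbg then b.tdo else b.tdt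
  cdt := if a.tdt ≤ b.tbg then a.cdt + b.cdo else a.cdt + b.cdt
  tdt := if a.tdt ≤ b.tbg then b.tdo else b.tdt

noncomputable def MW.plus : MW → MW → MW
  | MW.e, q => q
  | q, MW.e => q
  | MW.inf, _ => MW.inf
  | _, MW.inf => MW.inf
  | MW.res a, MW.res b => MW.res (a.plus b)

inductive Vtx (Job : Type) where
  | o : Vtx Job
  | d : Vtx Job
  | jv (j : Job) (hb : ℤ) (bl : Bool) : Vtx Job
  | ev (he : ℤ) : Vtx Job

section ShiftDigraph

variable {Job : Type} (bj fj : Job → ℤ) (Hb Hf : Finset ℤ)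
  (blunch flunch tbr tmax tml : ℤ)

def Jbl (hb : ℤ) (j : Job) : Prop :=
  hb ≤ bj j ∧ fj j ≤ flunch - tbr ∧ fj j ≤ hb + tmax

def Jal (hb : ℤ) (j : Job) : Prop :=
  hb ≤ bj j ∧ blunch + tbr ≤ bj j ∧ fj j ≤ hb + tmax

inductive Arc : Vtx Job → Vtx Job → Prop
  | o_bl {hb : ℤ} {j : Job} : hb ∈ Hb → hb ≤ flunch - tml →
      Jbl bj fj flunch tbr tmax hb j → Arc .o (.jv j hb true)
  | o_al {hb : ℤ} {j : Job} : hb ∈ Hb → flunch - tml < hb →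
      Jal bj fj blunch tbr tmax hb j → Arc .o (.jv j hb false)
  | bl_bl {hb : ℤ} {j j' : Job} : hb ∈ Hb →
      Jbl bj fj flunch tbr tmax hb j → Jbl bj fj flunch tbr tmax hb j' →
      fj j ≤ bj j' → Arc (.jv j hb true) (.jv j' hb true)
  | bl_al {hb : ℤ} {j j' : Job} : hb ∈ Hb →
      Jbl bj fj flunch tbr tmax hb j → Jal bj fj blunch tbr tmax hb j' →
      fj j + tbr ≤ bj j' → Arc (.jv j hb true) (.jv j' hb false)
  | al_al {hb : ℤ} {j j' : Job} : hb ∈ Hb →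
      Jal bj fj blunch tbr tmax hb j → Jal bj fj blunch tbr tmax hb j' →
      fj j ≤ bj j' → Arc (.jv j hb false) (.jv j' hb false)
  | bl_ev_early {hb he : ℤ} {j : Job} : hb ∈ Hb → he ∈ Hf →
      Jbl bj fj flunch tbr tmax hb j → he < blunch + tml →
      fj j ≤ he → he ≤ hb + tmax → Arc (.jv j hb true) (.ev he)
  | bl_ev_late {hb he : ℤ} {j : Job} : hb ∈ Hb → he ∈ Hf →
      Jbl bj fj flunch tbr tmax hb j → blunch + tml ≤ he →
      fj j + tbr ≤ he → he ≤ hb + tmax → Arc (.jv j hb true) (.ev he)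
  | al_ev {hb he : ℤ} {j : Job} : hb ∈ Hb → he ∈ Hf →
      Jal bj fj blunch tbr tmax hb j → blunch + tml ≤ he →
      fj j ≤ he → he ≤ hb + tmax → Arc (.jv j hb false) (.ev he)
  | ev_d {he : ℤ} : he ∈ Hf → Arc (.ev he) .d

variable (xb xe : Job → ℤ) (vl : Job → Bool)

/-- The realized ending time attached to an arc leaving a job vertex under the
scenario: `x_e(j)` for arcs staying on the same side or ending before the lunch
threshold, and `x_e(j) + t_br` for arcs crossing the lunch break. -/
def arcEnd (u v : Vtx Job) : WithBot ℤ :=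
  match u, v with
  | .jv j _ true, .jv _ _ false => ((xe j + tbr : ℤ) : WithBot ℤ)
  | .jv j _ true, .ev he =>
      if blunch + tml ≤ he then ((xe j + tbr : ℤ) : WithBot ℤ)
      else ((xe j : ℤ) : WithBot ℤ)
  | .jv j _ _, _ => ((xe j : ℤ) : WithBot ℤ)
  | _, _ => 0

/-- The scenario-`ω` resource of an arc: for an arc leaving a job vertex
`(j, h_b, side)` it is `(x_b(j), do-pair, (1, −∞))` where the do-pair is
`(1, −∞)` if `j` is very late and `(0, arcEnd)` otherwise; every other arc
carries the neutral element `e`. -/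
noncomputable def qarc (u v : Vtx Job) : MW :=
  match u with
  | .jv j _ _ =>
      MW.res ⟨((xb j : ℤ) : WithBot ℤ),
        (if vl j then 1 else 0),
        (if vl j then ⊥ else arcEnd blunch tbr tml xe u v),
        1, ⊥⟩
  | _ => MW.e

/-- The job data along a walk: for each arc leaving a job vertex `(j, ·, ·)`,
the triple (very-late flag, realized beginning time, realized ending time as
seen by the next activity). -/
def walkData :
    ∀ {u w : Vtx Job},
      Walk (Vtx Job) (Arc bj fj Hb Hf blunch flunch tbr tmax tml) u w →
      List (Bool × ℤ × WithBot ℤ)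
  | _, _, .nil _ => []
  | _, _, @Walk.cons _ _ u v _ _ p =>
      (match u with
        | .jv j _ _ => [(vl j, xb j, arcEnd blunch tbr tml xe u v)]
        | _ => []) ++ walkData p

/-- The delay simulation: given the time from which the agent is available
(`⊥` = immediately, i.e. the previous job was rescheduled) and the list of job
data, return the number of rescheduled jobs and the time at which the agent
finishes its last non-rescheduled job (`⊥` if the last job is rescheduled). A
job is rescheduled iff it is very late or the agent is unavailable at its
realized beginning time. -/
noncomputable def simul : WithBot ℤ → List (Bool × ℤ × WithBot ℤ) → ℕ × WithBot ℤ
  | r, [] => (0, r)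
  | r, (b, s, t) :: rest =>
      if b = true ∨ (s : WithBot ℤ) < r then
        ((simul ⊥ rest).1 + 1, (simul ⊥ rest).2)
      else simul t rest

end ShiftDigraph

/-! Arcs other than those leaving a job vertex carry the neutral element, so the
resource of a path is the right fold under `⊕` of the resources of its jobs.
Because delay propagates only to the next job, the time `r` from which the agent
is available matters for the next job, starting at `s`, only through the test
`r ≤ s` (`simul_cons_eq_ite`); this is exactly the test `t_do ≤ t_bg` made by `⊕`,
so each `⊕` step of the fold is one step of the delay simulation. -/

@[simp]
lemma MW.e_plus (q : MW) : MW.plus MW.e q = q := by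
  cases q <;> rfl

lemma simul_bot_cons (b : Bool) (s : ℤ) (t : WithBot ℤ) (L : List (Bool × ℤ × WithBot ℤ)) :
    simul ⊥ ((b, s, t) :: L)
      = if b then ((simul ⊥ L).1 + 1, (simul ⊥ L).2) else simul t L := by
  cases b <;> simp [simul]

lemma simul_cons_eq_ite (r : WithBot ℤ) (b : Bool) (s : ℤ) (t : WithBot ℤ)
    (L : List (Bool × ℤ × WithBot ℤ)) :
    simul r ((b, s, t) :: L)
      = if r ≤ s then simul ⊥ ((b, s, t) :: L) else ((simul ⊥ L).1 + 1, (simul ⊥ L).2) := by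
  by_cases h : r ≤ s
  · simp [simul, h, not_lt_of_ge h]
  · simp [simul, h, lt_of_not_ge h]

/-- The resource `q_a^ω` of an arc leaving the vertex of a job with data `(b, s, t)`. -/
noncomputable def jobRes (d : Bool × ℤ × WithBot ℤ) : ResW :=
  ⟨d.2.1, if d.1 then 1 else 0, if d.1 then ⊥ else d.2.2, 1, ⊥⟩

noncomputable def listRes (L : List (Bool × ℤ × WithBot ℤ)) : MW :=
  L.foldr (fun d m => MW.plus (MW.res (jobRes d)) m) MW.e

noncomputable def shiftRes (d : Bool × ℤ × WithBot ℤ) (L : List (Bool × ℤ × WithBot ℤ)) :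
    ResW :=
  ⟨d.2.1, (simul ⊥ (d :: L)).1, (simul ⊥ (d :: L)).2, (simul ⊥ L).1 + 1, (simul ⊥ L).2⟩

lemma jobRes_eq_shiftRes_nil (d : Bool × ℤ × WithBot ℤ) : jobRes d = shiftRes d [] := by
  obtain ⟨b, s, t⟩ := d
  cases b <;> simp [jobRes, shiftRes, simul]

lemma jobRes_plus_shiftRes (d d' : Bool × ℤ × WithBot ℤ) (L : List (Bool × ℤ × WithBot ℤ)) :
    (jobRes d).plus (shiftRes d' L) = shiftRes d (d' :: L) := by
  obtain ⟨b, s, t⟩ := d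
  obtain ⟨b', s', t'⟩ := d'
  cases b
  · by_cases h : t ≤ s' <;>
      simp [jobRes, shiftRes, ResW.plus, simul_bot_cons false s t, simul_cons_eq_ite t, h,
        Nat.add_comm 1]
  · simp [jobRes, shiftRes, ResW.plus, simul_bot_cons true s t, Nat.add_comm 1]

lemma listRes_cons (d : Bool × ℤ × WithBot ℤ) (L : List (Bool × ℤ × WithBot ℤ)) :
    listRes (d :: L) = MW.res (shiftRes d L) := by
  induction L generalizing d with
  | nil => simp [listRes, MW.plus, jobRes_eq_shiftRes_nil]
  | cons d' L ih =>
    change MW.plus _ (listRes (d' :: L)) = _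
    rw [ih, ← jobRes_plus_shiftRes]
    rfl

theorem Walk.res_qarc_eq_listRes_walkData {Job : Type} (bj fj : Job → ℤ) (Hb Hf : Finset ℤ)
    (blunch flunch tbr tmax tml : ℤ) (xb xe : Job → ℤ) (vl : Job → Bool) {u w : Vtx Job}
    (p : Walk (Vtx Job) (Arc bj fj Hb Hf blunch flunch tbr tmax tml) u w) :
    p.res MW.plus MW.e (fun u v _ => qarc blunch tbr tml xb xe vl u v)
      = listRes (walkData bj fj Hb Hf blunch flunch tbr tmax tml xb xe vl p) := by
  induction p with
  | nil => rfl
  | cons h p ih =>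
    rename_i u _ _
    cases u with
    | jv => exact congrArg (MW.plus _) ih
    | _ => simpa [Walk.res, qarc, walkData] using ih

/-- for an `o`–`d` path `P` of the shift digraph, the `⊕`-sum of
the scenario-`ω` arc resources along `P` equals the resource whose `t_bg` is
the realized start time of the first job of the corresponding shift, whose
do-pair is (number of rescheduled jobs, realized completion time of the last
non-rescheduled job), and whose dt-pair is the same pair computed as if the
first job were rescheduled; in particular the `c_do`-component of
`⊕_{a∈P} q_a^ω` equals the number of rescheduled jobs of the shift of `P`
under `ω`. -/
theorem path_resource_semantics
    {Job : Type} (bj fj : Job → ℤ) (Hb Hf : Finset ℤ)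
    (blunch flunch tbr tmax tml : ℤ)
    (xb xe : Job → ℤ) (vl : Job → Bool)
    (P : Walk (Vtx Job) (Arc bj fj Hb Hf blunch flunch tbr tmax tml) .o .d)
    (vl₀ : Bool) (s₀ : ℤ) (t₀ : WithBot ℤ)
    (L : List (Bool × ℤ × WithBot ℤ))
    (hdata : walkData bj fj Hb Hf blunch flunch tbr tmax tml xb xe vl P
      = (vl₀, s₀, t₀) :: L) :
    P.res MW.plus MW.e
        (fun u v _ => qarc blunch tbr tml xb xe vl u v)
      = MW.res ⟨((s₀ : ℤ) : WithBot ℤ),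
          (simul ⊥ ((vl₀, s₀, t₀) :: L)).1,
          (simul ⊥ ((vl₀, s₀, t₀) :: L)).2,
          (simul ⊥ L).1 + 1,
          (simul ⊥ L).2⟩ := by
  rw [Walk.res_qarc_eq_listRes_walkData, hdata, listRes_cons]
  rfl
end
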